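/- For the laziest minimal random walk with parameter p ∈ (0,1): E[H_n] = a_n^{(1)}, E[H_n^2] = 2a_n^{(2)} - a_n^{(1)}, E[H_n^3] = 6a_n^{(3)} - 6a_n^{(2)} + a_n^{(1)}, and E[H_n^4] = 24a_n^{(4)} - 36a_n^{(3)} + 14a_n^{(2)} - a_n^{(1)}, where a_n^{(k)} = Γ(n+kp)/(Γ(n)Γ(1+kp)). -/

import Mathlib

open MeasureTheory ProbabilityTheory Filter Real

def lazyH {Ω : Type*} (X : ℕ → Ω → ℕ) (n : ℕ) (ω : Ω) : ℕ :=
  ∑ i ∈ Finset.Icc 1 n, X i ω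

/-- `a n k = Γ(n+kp)/(Γ(n)Γ(1+kp))`. -/
noncomputable def aSeqK (p : ℝ) (k n : ℕ) : ℝ :=
  Real.Gamma (n + k * p) / (Real.Gamma n * Real.Gamma (1 + k * p))

/-!
Write `h↑k = h (h+1) ⋯ (h+k-1)` for the rising factorial. Since `X_{n+1} ∈ {0,1}`, for any
`φ : ℕ → ℝ` the pull-out property gives
`E φ(H_{n+1}) = E φ(H_n) + (p/n) E[H_n (φ(H_n + 1) - φ(H_n))]`,
and `h ((h+1)↑k - h↑k) = k · h↑k`, so `E[H_{n+1}↑k] = (1 + kp/n) E[H_n↑k]`. Together with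
`H_1 = 1` this is the recursion of `k! a_n^{(k)}`, hence `E[H_n↑k] = k! a_n^{(k)}`. The moments
follow by expanding `h^j` in rising factorials (signed Stirling numbers of the first kind).
-/

lemma aSeqK_one {p : ℝ} (hp : 0 ≤ p) (k : ℕ) : aSeqK p k 1 = 1 := by
  have hΓ : Real.Gamma (1 + k * p) ≠ 0 := (Real.Gamma_pos_of_pos (by positivity)).ne'
  simp [aSeqK, hΓ]

lemma aSeqK_succ {p : ℝ} (hp : 0 ≤ p) (k : ℕ) {n : ℕ} (hn : 1 ≤ n) :
    aSeqK p k (n + 1) = (n + k * p) / n * aSeqK p k n := by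
  have hn0 : (0 : ℝ) < n := by exact_mod_cast hn
  have hnp : (0 : ℝ) < n + k * p := by positivity
  have hΓn : Real.Gamma n ≠ 0 := (Real.Gamma_pos_of_pos hn0).ne'
  have hΓk : Real.Gamma (1 + k * p) ≠ 0 := (Real.Gamma_pos_of_pos (by positivity)).ne'
  unfold aSeqK
  rw [Nat.cast_add_one, add_right_comm, Real.Gamma_add_one hnp.ne', Real.Gamma_add_one hn0.ne']
  field_simp

lemma integrable_comp_of_le_nat {Ω : Type*} {m0 : MeasurableSpace Ω} {μ : Measure Ω}
    [IsFiniteMeasure μ] {Y : Ω → ℕ} (hY : Measurable Y) {N : ℕ} (hYN : ∀ ω, Y ω ≤ N)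
    (φ : ℕ → ℝ) : Integrable (fun ω => φ (Y ω)) μ := by
  refine .of_bound (measurable_from_top.comp hY).aestronglyMeasurable
    (∑ j ∈ Finset.range (N + 1), ‖φ j‖) (ae_of_all _ fun ω => ?_)
  exact Finset.single_le_sum (f := fun j => ‖φ j‖) (fun _ _ => norm_nonneg _)
    (Finset.mem_range.mpr (Nat.lt_succ_of_le (hYN ω)))

lemma integral_mul_eq_of_condExp_eq {Ω : Type*} {m m0 : MeasurableSpace Ω} {μ : Measure Ω}
    (hm : m ≤ m0) [SigmaFinite (μ.trim hm)] {f g q : Ω → ℝ} (hf : StronglyMeasurable[m] f)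
    (hfg : Integrable (fun ω => f ω * g ω) μ) (hg : Integrable g μ) (hq : μ[g | m] =ᵐ[μ] q) :
    ∫ ω, f ω * g ω ∂μ = ∫ ω, f ω * q ω ∂μ := by
  calc ∫ ω, f ω * g ω ∂μ = ∫ ω, (μ[f * g | m]) ω ∂μ := (integral_condExp hm).symm
    _ = ∫ ω, f ω * q ω ∂μ :=
      integral_congr_ae ((condExp_mul_of_stronglyMeasurable_left hf hfg hg).trans
        ((EventuallyEq.refl _ f).mul hq))

section LazyWalk

variable {Ω : Type*} {m0 : MeasurableSpace Ω} {μ : Measure Ω} {ℱ : Filtration ℕ m0}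
  {X : ℕ → Ω → ℕ}

lemma lazyH_le (hXval : ∀ n ω, X n ω ≤ 1) (n : ℕ) (ω : Ω) : lazyH X n ω ≤ n := by
  calc lazyH X n ω ≤ ∑ _i ∈ Finset.Icc 1 n, 1 := Finset.sum_le_sum fun i _ => hXval i ω
    _ = n := by simp

lemma lazyH_succ (X : ℕ → Ω → ℕ) (n : ℕ) (ω : Ω) :
    lazyH X (n + 1) ω = lazyH X n ω + X (n + 1) ω := by
  unfold lazyH
  exact Finset.sum_Icc_succ_top (Nat.le_add_left 1 n) fun i => X i ω

lemma measurable_lazyH (hadp : ∀ n, Measurable[ℱ n] (X n)) (n : ℕ) :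
    Measurable[ℱ n] (lazyH X n) :=
  Finset.measurable_sum _ fun i hi => (hadp i).mono (ℱ.mono (Finset.mem_Icc.mp hi).2) le_rfl

variable [IsProbabilityMeasure μ]

lemma integrable_comp_lazyH (hXval : ∀ n ω, X n ω ≤ 1) (hadp : ∀ n, Measurable[ℱ n] (X n))
    (n : ℕ) (φ : ℕ → ℝ) : Integrable (fun ω => φ (lazyH X n ω)) μ :=
  integrable_comp_of_le_nat ((measurable_lazyH hadp n).mono (ℱ.le n) le_rfl) (lazyH_le hXval n) φ

lemma integral_comp_lazyH_succ {p : ℝ} (hXval : ∀ n ω, X n ω ≤ 1)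
    (hadp : ∀ n, Measurable[ℱ n] (X n)) {n : ℕ}
    (hcond : μ[(fun ω => (X (n + 1) ω : ℝ)) | ℱ n] =ᵐ[μ] fun ω => p * (lazyH X n ω : ℝ) / n)
    (φ : ℕ → ℝ) :
    ∫ ω, φ (lazyH X (n + 1) ω) ∂μ = ∫ ω, φ (lazyH X n ω) ∂μ
      + ∫ ω, (φ (lazyH X n ω + 1) - φ (lazyH X n ω)) * (p * lazyH X n ω / n) ∂μ := by
  set f : Ω → ℝ := fun ω => φ (lazyH X n ω + 1) - φ (lazyH X n ω)
  have hincr : ∀ ω, φ (lazyH X (n + 1) ω) = φ (lazyH X n ω) + f ω * X (n + 1) ω := by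
    intro ω
    rw [lazyH_succ]
    rcases Nat.le_one_iff_eq_zero_or_eq_one.mp (hXval (n + 1) ω) with h | h <;> simp [h, f]
  have hint := integrable_comp_lazyH (μ := μ) hXval hadp
  have hfX : Integrable (fun ω => f ω * X (n + 1) ω) μ := by
    refine ((hint (n + 1) φ).sub (hint n φ)).congr (ae_of_all _ fun ω => ?_)
    simp [hincr ω]
  have hX : Integrable (fun ω => (X (n + 1) ω : ℝ)) μ :=
    integrable_comp_of_le_nat ((hadp (n + 1)).mono (ℱ.le _) le_rfl) (fun ω => hXval (n + 1) ω) _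
  have hf : StronglyMeasurable[ℱ n] f :=
    ((measurable_from_top : Measurable fun j : ℕ => φ (j + 1) - φ j).comp
      (measurable_lazyH hadp n)).stronglyMeasurable
  rw [integral_congr_ae (ae_of_all _ hincr), integral_add (hint n φ) hfX,
    integral_mul_eq_of_condExp_eq (ℱ.le n) hf hfX hX hcond]

lemma integral_ascFactorial_lazyH_succ {p : ℝ} (hXval : ∀ n ω, X n ω ≤ 1)
    (hadp : ∀ n, Measurable[ℱ n] (X n)) {n : ℕ} (hn : 1 ≤ n)
    (hcond : μ[(fun ω => (X (n + 1) ω : ℝ)) | ℱ n] =ᵐ[μ] fun ω => p * (lazyH X n ω : ℝ) / n)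
    (k : ℕ) :
    ∫ ω, ((lazyH X (n + 1) ω).ascFactorial k : ℝ) ∂μ
      = (n + k * p) / n * ∫ ω, ((lazyH X n ω).ascFactorial k : ℝ) ∂μ := by
  have hn0 : (n : ℝ) ≠ 0 := by positivity
  have hdiff : ∀ h : ℕ, (((h + 1).ascFactorial k : ℝ) - h.ascFactorial k) * (p * h / n)
      = k * p / n * h.ascFactorial k := by
    intro h
    have hrise : (h : ℝ) * (h + 1).ascFactorial k = (h + k) * h.ascFactorial k := by
      exact_mod_cast Nat.succ_ascFactorial h k
    linear_combination (p / n) * hrise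
  rw [integral_comp_lazyH_succ hXval hadp hcond fun h => (h.ascFactorial k : ℝ),
    integral_congr_ae (ae_of_all _ fun ω => hdiff _), integral_const_mul]
  field_simp

theorem integral_ascFactorial_lazyH {p : ℝ} (hp : 0 ≤ p) (hXval : ∀ n ω, X n ω ≤ 1)
    (hX1 : ∀ᵐ ω ∂μ, X 1 ω = 1) (hadp : ∀ n, Measurable[ℱ n] (X n))
    (hcond : ∀ n : ℕ, 1 ≤ n →
      μ[(fun ω => (X (n + 1) ω : ℝ)) | ℱ n] =ᵐ[μ] fun ω => p * (lazyH X n ω : ℝ) / n)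
    (k : ℕ) {n : ℕ} (hn : 1 ≤ n) :
    ∫ ω, ((lazyH X n ω).ascFactorial k : ℝ) ∂μ = k.factorial * aSeqK p k n := by
  induction n, hn using Nat.le_induction with
  | base =>
    have hH1 : ∀ᵐ ω ∂μ, ((lazyH X 1 ω).ascFactorial k : ℝ) = k.factorial := by
      filter_upwards [hX1] with ω hω
      simp [lazyH, hω]
    simp [integral_congr_ae hH1, aSeqK_one hp]
  | succ n hn ih =>
    rw [integral_ascFactorial_lazyH_succ hXval hadp hn (hcond n hn), ih, aSeqK_succ hp k hn]
    ring

lemma integral_pow_lazyH {p : ℝ} (hp : 0 ≤ p) (hXval : ∀ n ω, X n ω ≤ 1)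
    (hX1 : ∀ᵐ ω ∂μ, X 1 ω = 1) (hadp : ∀ n, Measurable[ℱ n] (X n))
    (hcond : ∀ n : ℕ, 1 ≤ n →
      μ[(fun ω => (X (n + 1) ω : ℝ)) | ℱ n] =ᵐ[μ] fun ω => p * (lazyH X n ω : ℝ) / n)
    {j m : ℕ} (c : Fin m → ℝ) (hc : ∀ h : ℕ, (h : ℝ) ^ j = ∑ i, c i * h.ascFactorial i)
    {n : ℕ} (hn : 1 ≤ n) :
    ∫ ω, (lazyH X n ω : ℝ) ^ j ∂μ = ∑ i, c i * ((i : ℕ).factorial * aSeqK p i n) := by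
  simp_rw [hc, ← integral_ascFactorial_lazyH hp hXval hX1 hadp hcond _ hn, ← integral_const_mul]
  exact integral_finsetSum _ fun i _ =>
    integrable_comp_lazyH hXval hadp n fun h => c i * h.ascFactorial i

end LazyWalk

theorem stmt8_general {Ω : Type*} {m0 : MeasurableSpace Ω} (μ : Measure Ω) [IsProbabilityMeasure μ]
    (ℱ : Filtration ℕ m0) (p : ℝ) (hp : 0 < p)
    (X : ℕ → Ω → ℕ)
    (hXval : ∀ n ω, X n ω ≤ 1)
    (hX1 : ∀ᵐ ω ∂μ, X 1 ω = 1)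
    (hadp : ∀ n, Measurable[ℱ n] (X n))
    (hcond : ∀ n : ℕ, 1 ≤ n →
      μ[(fun ω => (X (n + 1) ω : ℝ)) | ℱ n] =ᵐ[μ]
        fun ω => p * (lazyH X n ω : ℝ) / n) :
    ∀ n : ℕ, 1 ≤ n →
      (∫ ω, (lazyH X n ω : ℝ) ∂μ = aSeqK p 1 n) ∧
      (∫ ω, (lazyH X n ω : ℝ) ^ 2 ∂μ = 2 * aSeqK p 2 n - aSeqK p 1 n) ∧
      (∫ ω, (lazyH X n ω : ℝ) ^ 3 ∂μ = 6 * aSeqK p 3 n - 6 * aSeqK p 2 n + aSeqK p 1 n) ∧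
      (∫ ω, (lazyH X n ω : ℝ) ^ 4 ∂μ =
        24 * aSeqK p 4 n - 36 * aSeqK p 3 n + 14 * aSeqK p 2 n - aSeqK p 1 n) := by
  intro n hn
  have hmoment := fun {j m : ℕ} (c : Fin m → ℝ) hc =>
    integral_pow_lazyH (j := j) hp.le hXval hX1 hadp hcond c hc hn
  refine ⟨?_, ?_, ?_, ?_⟩
  · simpa using hmoment (j := 1) ![0, 1] fun h => by
      simp [Fin.sum_univ_succ, Nat.ascFactorial_succ]
  · rw [hmoment ![0, -1, 1] fun h => by simp [Fin.sum_univ_succ, Nat.ascFactorial_succ]; ring]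
    simp [Fin.sum_univ_succ]
    ring
  · rw [hmoment ![0, 1, -3, 1] fun h => by
      simp [Fin.sum_univ_succ, Nat.ascFactorial_succ]; ring]
    simp [Fin.sum_univ_succ]
    ring
  · rw [hmoment ![0, -1, 7, -6, 1] fun h => by
      simp [Fin.sum_univ_succ, Nat.ascFactorial_succ]; ring]
    simp [Fin.sum_univ_succ, Nat.factorial]
    ring

theorem stmt8 {Ω : Type*} {m0 : MeasurableSpace Ω} (μ : Measure Ω) [IsProbabilityMeasure μ]
    (ℱ : Filtration ℕ m0) (p : ℝ) (hp : 0 < p) (hp1 : p < 1)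
    (X : ℕ → Ω → ℕ)
    (hXval : ∀ n ω, X n ω ≤ 1)
    (hX1 : ∀ᵐ ω ∂μ, X 1 ω = 1)
    (hadp : ∀ n, Measurable[ℱ n] (X n))
    (hcond : ∀ n : ℕ, 1 ≤ n →
      μ[(fun ω => (X (n + 1) ω : ℝ)) | ℱ n] =ᵐ[μ]
        fun ω => p * (lazyH X n ω : ℝ) / n) :
    ∀ n : ℕ, 1 ≤ n →
      (∫ ω, (lazyH X n ω : ℝ) ∂μ = aSeqK p 1 n) ∧
      (∫ ω, (lazyH X n ω : ℝ) ^ 2 ∂μ = 2 * aSeqK p 2 n - aSeqK p 1 n) ∧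
      (∫ ω, (lazyH X n ω : ℝ) ^ 3 ∂μ = 6 * aSeqK p 3 n - 6 * aSeqK p 2 n + aSeqK p 1 n) ∧
      (∫ ω, (lazyH X n ω : ℝ) ^ 4 ∂μ =
        24 * aSeqK p 4 n - 36 * aSeqK p 3 n + 14 * aSeqK p 2 n - aSeqK p 1 n) :=
  stmt8_general μ ℱ p hp X hXval hX1 hadp hcond
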